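/- The reduced Markov chain on nonempty subsets of {1,…,N} (with transitions P(E→E∪{d}) = 2|E|/(3·C(N,2)) for d∉E and P(E→E∖{e}) = 2(|E|−1)/(9·C(N,2)) for e∈E, E remaining nonempty) is irreducible and aperiodic, hence ergodic with unique stationary distribution M(C) = 3^{|C|}/(4^N−1). -/
import Mathlib


/-- States of the reduced chain: nonempty subsets of `{1,…,N}`. -/
abbrev RState (N : ℕ) := { C : Finset (Fin N) // C.Nonempty }

open Classical in
/-- Transition matrix of the reduced chain on nonempty subsets:
`P(E → E∪{d}) = 2|E|/(3·C(N,2))` for `d ∉ E`, `P(E → E∖{e}) = 2(|E|−1)/(9·C(N,2))`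
for `e ∈ E` (with the result remaining nonempty), the remaining mass staying at `E`. -/
noncomputable def reducedP (N : ℕ) : Matrix (RState N) (RState N) ℝ :=
  fun C D =>
    if ∃ d ∉ C.1, D.1 = insert d C.1 then
      2 * C.1.card / (3 * ((N : ℝ) * ((N : ℝ) - 1) / 2))
    else if ∃ e ∈ C.1, D.1 = C.1.erase e then
      2 * ((C.1.card : ℝ) - 1) / (9 * ((N : ℝ) * ((N : ℝ) - 1) / 2))
    else if D = C then
      1 - 2 * C.1.card * ((N : ℝ) - C.1.card) / (3 * ((N : ℝ) * ((N : ℝ) - 1) / 2))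
        - 2 * C.1.card * ((C.1.card : ℝ) - 1) / (9 * ((N : ℝ) * ((N : ℝ) - 1) / 2))
    else 0


section Aux
variable {N : ℕ}

lemma B_pos (hN : 2 ≤ N) : 0 < (N : ℝ) * ((N : ℝ) - 1) / 2 := by
  have : (2:ℝ) ≤ N := by exact_mod_cast hN
  nlinarith

lemma hold_pos (hN : 2 ≤ N) (k : ℝ) :
    0 < 1 - 2 * k * ((N : ℝ) - k) / (3 * ((N : ℝ) * ((N : ℝ) - 1) / 2))
      - 2 * k * (k - 1) / (9 * ((N : ℝ) * ((N : ℝ) - 1) / 2)) := by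
  have hB := B_pos hN
  have hn : (2:ℝ) ≤ N := by exact_mod_cast hN
  rw [sub_sub, sub_pos, div_add_div _ _ (by positivity) (by positivity), div_lt_one (by positivity)]
  nlinarith [sq_nonneg (4*k - 3*(N:ℝ) + 1), sq_nonneg ((N:ℝ) - 2)]

lemma card_pos' (C : RState N) : 1 ≤ (C.1.card : ℝ) := by
  have := Finset.card_pos.mpr C.2
  exact_mod_cast this

open Classical in
lemma entry_nonneg (hN : 2 ≤ N) (C D : RState N) : 0 ≤ reducedP N C D := by
  have hB := B_pos hN
  have hk := card_pos' C
  unfold reducedP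
  split_ifs with h1 h2 h3
  · positivity
  · have : (0:ℝ) ≤ (C.1.card : ℝ) - 1 := by linarith
    positivity
  · exact le_of_lt (hold_pos hN _)
  · exact le_refl 0

lemma cond1_card {C D : RState N} (h : ∃ d ∉ C.1, D.1 = insert d C.1) :
    D.1.card = C.1.card + 1 := by
  obtain ⟨d, hd, rfl'⟩ := h
  rw [rfl', Finset.card_insert_of_notMem hd]

lemma cond2_card {C D : RState N} (h : ∃ e ∈ C.1, D.1 = C.1.erase e) :
    D.1.card + 1 = C.1.card := by
  obtain ⟨e, he, rfl'⟩ := h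
  rw [rfl', Finset.card_erase_of_mem he]
  have := Finset.card_pos.mpr C.2
  omega

lemma cond2_two {C D : RState N} (h : ∃ e ∈ C.1, D.1 = C.1.erase e) :
    2 ≤ C.1.card := by
  have h1 := cond2_card h
  have := Finset.card_pos.mpr D.2
  omega

lemma not_cond1_self (C : RState N) : ¬ ∃ d ∉ C.1, C.1 = insert d C.1 := by
  rintro ⟨d, hd, h⟩
  exact hd (h ▸ Finset.mem_insert_self d C.1)

lemma not_cond2_self (C : RState N) : ¬ ∃ e ∈ C.1, C.1 = C.1.erase e := by
  rintro ⟨e, he, h⟩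
  exact (Finset.notMem_erase e C.1) (h ▸ he)

open Classical in
lemma diag_pos (hN : 2 ≤ N) (C : RState N) : 0 < reducedP N C C := by
  unfold reducedP
  rw [if_neg (not_cond1_self C), if_neg (not_cond2_self C), if_pos rfl]
  exact hold_pos hN _

open Classical in
lemma up_pos (hN : 2 ≤ N) (C D : RState N) (h : ∃ d ∉ C.1, D.1 = insert d C.1) :
    0 < reducedP N C D := by
  have hB := B_pos hN
  have hk := card_pos' C
  unfold reducedP
  rw [if_pos h]
  positivity

open Classical in
lemma down_pos (hN : 2 ≤ N) (C D : RState N) (h : ∃ e ∈ C.1, D.1 = C.1.erase e) :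
    0 < reducedP N C D := by
  have hB := B_pos hN
  have hk : (2:ℝ) ≤ (C.1.card : ℝ) := by exact_mod_cast cond2_two h
  have h1 : ¬ ∃ d ∉ C.1, D.1 = insert d C.1 := by
    intro h1
    have := cond1_card h1
    have := cond2_card h
    omega
  unfold reducedP
  rw [if_neg h1, if_pos h]
  have : (0:ℝ) < (C.1.card : ℝ) - 1 := by linarith
  positivity


lemma pow_entry_nonneg (hN : 2 ≤ N) (n : ℕ) (C D : RState N) :
    0 ≤ (reducedP N ^ n) C D := by
  induction n generalizing C D with
  | zero =>
      rw [pow_zero, Matrix.one_apply]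
      split_ifs <;> norm_num
  | succ n ih =>
      rw [pow_succ, Matrix.mul_apply]
      exact Finset.sum_nonneg fun E _ => mul_nonneg (ih C E) (entry_nonneg hN E D)

def Reach (N : ℕ) (C D : RState N) : Prop := ∃ n, 0 < (reducedP N ^ n) C D

lemma reach_refl (C : RState N) : Reach N C C :=
  ⟨0, by rw [pow_zero, Matrix.one_apply_eq]; norm_num⟩

lemma reach_trans (hN : 2 ≤ N) {C E D : RState N} (h1 : Reach N C E) (h2 : Reach N E D) :
    Reach N C D := by
  obtain ⟨m, hm⟩ := h1
  obtain ⟨n, hn⟩ := h2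
  refine ⟨m + n, ?_⟩
  rw [pow_add, Matrix.mul_apply]
  have : 0 < (reducedP N ^ m) C E * (reducedP N ^ n) E D := mul_pos hm hn
  refine Finset.sum_pos' (fun F _ => mul_nonneg (pow_entry_nonneg hN m C F)
    (pow_entry_nonneg hN n F D)) ⟨E, Finset.mem_univ E, this⟩

lemma reach_step (hN : 2 ≤ N) {C D : RState N} (h : 0 < reducedP N C D) : Reach N C D :=
  ⟨1, by rwa [pow_one]⟩

lemma reach_univ (hN : 2 ≤ N) (hU : (Finset.univ : Finset (Fin N)).Nonempty) (C : RState N) :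
    Reach N C ⟨Finset.univ, hU⟩ := by
  obtain ⟨m, hm⟩ : ∃ m, (Finset.univ \ C.1).card ≤ m := ⟨_, le_refl _⟩
  induction m generalizing C with
  | zero =>
      have : C.1 = Finset.univ := by
        have := Finset.card_eq_zero.mp (Nat.le_zero.mp hm)
        exact Finset.univ_subset_iff.mp (Finset.sdiff_eq_empty_iff_subset.mp this)
      have : C = ⟨Finset.univ, hU⟩ := Subtype.ext this
      rw [this]; exact reach_refl _
  | succ m ih =>
      by_cases hC : C.1 = Finset.univ
      · have : C = ⟨Finset.univ, hU⟩ := Subtype.ext hC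
        rw [this]; exact reach_refl _
      · obtain ⟨d, hd⟩ : ∃ d, d ∉ C.1 := by
          by_contra h
          push_neg at h
          exact hC (Finset.eq_univ_of_forall h)
        set C' : RState N := ⟨insert d C.1, Finset.insert_nonempty _ _⟩ with hC'
        have hstep : 0 < reducedP N C C' := up_pos hN C C' ⟨d, hd, rfl⟩
        refine reach_trans hN (reach_step hN hstep) (ih C' ?_)
        have : (Finset.univ \ C'.1).card + 1 = (Finset.univ \ C.1).card := by
          rw [hC']
          simp only [Finset.sdiff_insert]
          rw [Finset.card_erase_of_mem (by simp [hd])]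
          have : d ∈ Finset.univ \ C.1 := by simp [hd]
          have := Finset.card_pos.mpr ⟨d, this⟩
          omega
        omega

lemma reach_down (hN : 2 ≤ N) (D : RState N) :
    ∀ m (C : RState N), D.1 ⊆ C.1 → C.1.card ≤ m → Reach N C D := by
  intro m
  induction m with
  | zero => intro C _ h; have := Finset.card_pos.mpr C.2; omega
  | succ m ih =>
      intro C hsub hcard
      by_cases hC : C.1 = D.1
      · have : C = D := Subtype.ext hC
        rw [this]; exact reach_refl _
      · obtain ⟨e, heC, heD⟩ : ∃ e ∈ C.1, e ∉ D.1 := by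
          by_contra h
          push_neg at h
          exact hC (Finset.Subset.antisymm h hsub)
        have hne : (C.1.erase e).Nonempty := by
          obtain ⟨x, hx⟩ := D.2
          exact ⟨x, Finset.mem_erase.mpr ⟨fun h => heD (h ▸ hx), hsub hx⟩⟩
        set C' : RState N := ⟨C.1.erase e, hne⟩ with hC'
        have hstep : 0 < reducedP N C C' := down_pos hN C C' ⟨e, heC, rfl⟩
        refine reach_trans hN (reach_step hN hstep) (ih C' ?_ ?_)
        · exact fun x hx => Finset.mem_erase.mpr ⟨fun h => heD (h ▸ hx), hsub hx⟩
        · have := Finset.card_erase_of_mem heC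
          have := Finset.card_pos.mpr C.2
          simp only [hC']
          omega

lemma reach_all (hN : 2 ≤ N) (C D : RState N) : Reach N C D := by
  have hU : (Finset.univ : Finset (Fin N)).Nonempty := ⟨⟨0, by omega⟩, Finset.mem_univ _⟩
  exact reach_trans hN (reach_univ hN hU C)
    (reach_down hN D _ ⟨Finset.univ, hU⟩ (Finset.subset_univ _) (le_refl _))


lemma cond_symm {C D : RState N} :
    (∃ d ∉ C.1, D.1 = insert d C.1) ↔ (∃ e ∈ D.1, C.1 = D.1.erase e) := by
  constructor
  · rintro ⟨d, hd, h⟩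
    exact ⟨d, h ▸ Finset.mem_insert_self d C.1, by rw [h, Finset.erase_insert hd]⟩
  · rintro ⟨e, he, h⟩
    refine ⟨e, h ▸ Finset.notMem_erase e D.1, ?_⟩
    rw [h, Finset.insert_erase he]

open Classical in
lemma P_split (C D : RState N) :
    reducedP N C D =
      (if ∃ d ∉ C.1, D.1 = insert d C.1 then
        2 * C.1.card / (3 * ((N : ℝ) * ((N : ℝ) - 1) / 2)) else 0)
    + (if ∃ e ∈ C.1, D.1 = C.1.erase e then
        2 * ((C.1.card : ℝ) - 1) / (9 * ((N : ℝ) * ((N : ℝ) - 1) / 2)) else 0)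
    + (if D = C then
        1 - 2 * C.1.card * ((N : ℝ) - C.1.card) / (3 * ((N : ℝ) * ((N : ℝ) - 1) / 2))
          - 2 * C.1.card * ((C.1.card : ℝ) - 1) / (9 * ((N : ℝ) * ((N : ℝ) - 1) / 2)) else 0) := by
  unfold reducedP
  by_cases h1 : ∃ d ∉ C.1, D.1 = insert d C.1
  · have hc1 := cond1_card h1
    have h2 : ¬ ∃ e ∈ C.1, D.1 = C.1.erase e := fun h => by have := cond2_card h; omega
    have h3 : D ≠ C := by
      intro h; rw [h] at hc1; omega
    simp [h1, h2, h3]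
  · by_cases h2 : ∃ e ∈ C.1, D.1 = C.1.erase e
    · have hc2 := cond2_card h2
      have h3 : D ≠ C := by
        intro h; rw [h] at hc2; omega
      simp [h1, h2, h3]
    · by_cases h3 : D = C
      · subst h3; simp [h1, h2]
      · simp [h1, h2, h3]

lemma card_le (C : RState N) : C.1.card ≤ N := by
  have := Finset.card_le_univ C.1
  simpa using this

open Classical in
lemma card_upset (C : RState N) :
    ((Finset.univ : Finset (RState N)).filter
      (fun D => ∃ d ∉ C.1, D.1 = insert d C.1)).card = (C.1ᶜ).card := by
  refine (Finset.card_bij (fun d (hd : d ∈ C.1ᶜ) =>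
    (⟨insert d C.1, Finset.insert_nonempty _ _⟩ : RState N)) ?_ ?_ ?_).symm
  · intro d hd
    simp only [Finset.mem_filter, Finset.mem_univ, true_and]
    exact ⟨d, Finset.mem_compl.mp hd, rfl⟩
  · intro a1 ha1 a2 ha2 h
    have h' : insert a1 C.1 = insert a2 C.1 := congrArg Subtype.val h
    have : a1 ∈ insert a2 C.1 := h' ▸ Finset.mem_insert_self a1 C.1
    rcases Finset.mem_insert.mp this with h | h
    · exact h
    · exact absurd h (Finset.mem_compl.mp ha1)
  · intro b hb
    obtain ⟨d, hd, hbd⟩ := (Finset.mem_filter.mp hb).2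
    exact ⟨d, Finset.mem_compl.mpr hd, (Subtype.ext hbd).symm⟩

open Classical in
lemma card_downset (C : RState N) (h2 : 2 ≤ C.1.card) :
    ((Finset.univ : Finset (RState N)).filter
      (fun D => ∃ e ∈ C.1, D.1 = C.1.erase e)).card = C.1.card := by
  have hne : ∀ e, (C.1.erase e).Nonempty := by
    intro e
    apply Finset.card_pos.mp
    rcases Classical.em (e ∈ C.1) with he | he
    · rw [Finset.card_erase_of_mem he]; omega
    · rw [Finset.erase_eq_of_notMem he]; omega
  refine (Finset.card_bij (fun e (he : e ∈ C.1) =>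
    (⟨C.1.erase e, hne e⟩ : RState N)) ?_ ?_ ?_).symm
  · intro e he
    simp only [Finset.mem_filter, Finset.mem_univ, true_and]
    exact ⟨e, he, rfl⟩
  · intro a1 ha1 a2 ha2 h
    have h' : C.1.erase a1 = C.1.erase a2 := congrArg Subtype.val h
    by_contra hne'
    have : a1 ∈ C.1.erase a2 := Finset.mem_erase.mpr ⟨hne', ha1⟩
    rw [← h'] at this
    exact (Finset.notMem_erase a1 C.1) this
  · intro b hb
    obtain ⟨e, he, hbe⟩ := (Finset.mem_filter.mp hb).2
    exact ⟨e, he, (Subtype.ext hbe).symm⟩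

open Classical in
lemma row_sum (hN : 2 ≤ N) (C : RState N) : ∑ D : RState N, reducedP N C D = 1 := by
  have hB := B_pos hN
  have hk1 : 1 ≤ C.1.card := Finset.card_pos.mpr C.2
  have hkN : C.1.card ≤ N := card_le C
  have hS1 : ∑ D : RState N,
      (if ∃ d ∉ C.1, D.1 = insert d C.1 then
        2 * (C.1.card : ℝ) / (3 * ((N : ℝ) * ((N : ℝ) - 1) / 2)) else 0)
      = ((N : ℝ) - C.1.card) * (2 * (C.1.card : ℝ) / (3 * ((N : ℝ) * ((N : ℝ) - 1) / 2))) := by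
    rw [Finset.sum_ite, Finset.sum_const, Finset.sum_const_zero, add_zero, nsmul_eq_mul,
      card_upset, Finset.card_compl]
    congr 1
    simp only [Fintype.card_fin]
    push_cast [hkN]
    ring
  have hS2 : ∑ D : RState N,
      (if ∃ e ∈ C.1, D.1 = C.1.erase e then
        2 * ((C.1.card : ℝ) - 1) / (9 * ((N : ℝ) * ((N : ℝ) - 1) / 2)) else 0)
      = (C.1.card : ℝ) * (2 * ((C.1.card : ℝ) - 1) / (9 * ((N : ℝ) * ((N : ℝ) - 1) / 2))) := by
    rw [Finset.sum_ite, Finset.sum_const, Finset.sum_const_zero, add_zero, nsmul_eq_mul]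
    rcases Classical.em (2 ≤ C.1.card) with h2 | h2
    · rw [card_downset C h2]
    · have hk : C.1.card = 1 := by omega
      rw [hk]
      norm_num
  have hS3 : ∑ D : RState N,
      (if D = C then
        1 - 2 * C.1.card * ((N : ℝ) - C.1.card) / (3 * ((N : ℝ) * ((N : ℝ) - 1) / 2))
          - 2 * C.1.card * ((C.1.card : ℝ) - 1) / (9 * ((N : ℝ) * ((N : ℝ) - 1) / 2)) else 0)
      = 1 - 2 * C.1.card * ((N : ℝ) - C.1.card) / (3 * ((N : ℝ) * ((N : ℝ) - 1) / 2))
          - 2 * C.1.card * ((C.1.card : ℝ) - 1) / (9 * ((N : ℝ) * ((N : ℝ) - 1) / 2)) := by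
    rw [Finset.sum_ite_eq' Finset.univ C, if_pos (Finset.mem_univ C)]
  calc ∑ D : RState N, reducedP N C D
      = ∑ D : RState N, ((if ∃ d ∉ C.1, D.1 = insert d C.1 then
          2 * (C.1.card : ℝ) / (3 * ((N : ℝ) * ((N : ℝ) - 1) / 2)) else 0)
        + (if ∃ e ∈ C.1, D.1 = C.1.erase e then
          2 * ((C.1.card : ℝ) - 1) / (9 * ((N : ℝ) * ((N : ℝ) - 1) / 2)) else 0)
        + (if D = C then
          1 - 2 * C.1.card * ((N : ℝ) - C.1.card) / (3 * ((N : ℝ) * ((N : ℝ) - 1) / 2))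
            - 2 * C.1.card * ((C.1.card : ℝ) - 1) / (9 * ((N : ℝ) * ((N : ℝ) - 1) / 2)) else 0)) :=
        Finset.sum_congr rfl (fun D _ => P_split C D)
    _ = 1 := by
        rw [Finset.sum_add_distrib, Finset.sum_add_distrib, hS1, hS2, hS3]
        field_simp
        ring

open Classical in
lemma DB (hN : 2 ≤ N) (C D : RState N) :
    (3:ℝ)^C.1.card * reducedP N C D = (3:ℝ)^D.1.card * reducedP N D C := by
  unfold reducedP
  by_cases h1 : ∃ d ∉ C.1, D.1 = insert d C.1
  · have hc : D.1.card = C.1.card + 1 := cond1_card h1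
    have h1' : ¬ ∃ d ∉ D.1, C.1 = insert d D.1 := fun h => by
      have := cond1_card h; omega
    rw [if_pos h1, if_neg h1', if_pos (cond_symm.mp h1), hc, pow_succ]
    set b : ℝ := (N:ℝ)*((N:ℝ)-1)/2 with hbdef
    have hB : b ≠ 0 := ne_of_gt (B_pos hN)
    push_cast
    field_simp
    ring
  · by_cases h2 : ∃ e ∈ C.1, D.1 = C.1.erase e
    · have hc : D.1.card + 1 = C.1.card := cond2_card h2
      have h1' : ∃ d ∉ D.1, C.1 = insert d D.1 := cond_symm.mpr h2
      rw [if_neg h1, if_pos h2, if_pos h1', ← hc, pow_succ]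
      set b : ℝ := (N:ℝ)*((N:ℝ)-1)/2 with hbdef
      have hB : b ≠ 0 := ne_of_gt (B_pos hN)
      push_cast
      field_simp
      ring
    · by_cases h3 : D = C
      · subst h3; rfl
      · have h1' : ¬ ∃ d ∉ D.1, C.1 = insert d D.1 := fun h => h2 (cond_symm.mp h)
        have h2' : ¬ ∃ e ∈ D.1, C.1 = D.1.erase e := fun h => h1 (cond_symm.mpr h)
        have h3' : ¬ (C = D) := fun h => h3 h.symm
        rw [if_neg h1, if_neg h2, if_neg h3, if_neg h1', if_neg h2', if_neg h3',
          mul_zero, mul_zero]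

lemma Z_pos (hN : 2 ≤ N) : (0:ℝ) < 4^N - 1 := by
  have : (1:ℝ) < 4^N := one_lt_pow₀ (by norm_num) (by omega)
  linarith

open Classical in
lemma stat (hN : 2 ≤ N) (D : RState N) :
    ∑ C : RState N, ((3:ℝ)^C.1.card/((4:ℝ)^N - 1)) * reducedP N C D
      = (3:ℝ)^D.1.card/((4:ℝ)^N - 1) := by
  calc ∑ C : RState N, ((3:ℝ)^C.1.card/((4:ℝ)^N - 1)) * reducedP N C D
      = ∑ C : RState N, ((3:ℝ)^D.1.card * reducedP N D C)/((4:ℝ)^N - 1) := by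
        refine Finset.sum_congr rfl fun C _ => ?_
        rw [div_mul_eq_mul_div, DB hN C D]
    _ = ((3:ℝ)^D.1.card * ∑ C : RState N, reducedP N D C)/((4:ℝ)^N - 1) := by
        rw [Finset.mul_sum, Finset.sum_div]
    _ = (3:ℝ)^D.1.card/((4:ℝ)^N - 1) := by rw [row_sum hN D, mul_one]

open Classical in
lemma pi_sum : ∑ C : RState N, (3:ℝ)^C.1.card = 4^N - 1 := by
  have h1 : ∑ t : Finset (Fin N), (3:ℝ)^t.card = 4^N := by
    have h := Finset.prod_add (fun _ : Fin N => (3:ℝ)) (fun _ => 1) Finset.univ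
    simp only [Finset.prod_const, Finset.card_univ, Fintype.card_fin, one_pow, mul_one,
      Finset.powerset_univ] at h
    norm_num at h
    rw [← h]
  have h2 : ∑ C : RState N, (3:ℝ)^C.1.card
      = ∑ t ∈ Finset.univ.filter (fun t : Finset (Fin N) => t.Nonempty), (3:ℝ)^t.card := by
    rw [Finset.sum_subtype (p := fun t : Finset (Fin N) => t.Nonempty)
      (Finset.univ.filter (fun t : Finset (Fin N) => t.Nonempty))
      (fun t => by simp) (fun t => (3:ℝ)^t.card)]
  have h3 : Finset.univ.filter (fun t : Finset (Fin N) => ¬ t.Nonempty) = {∅} := by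
    ext t
    simp [Finset.not_nonempty_iff_eq_empty]
  have h4 := Finset.sum_filter_add_sum_filter_not Finset.univ
    (fun t : Finset (Fin N) => t.Nonempty) (fun t => (3:ℝ)^t.card)
  rw [h3, Finset.sum_singleton, Finset.card_empty, pow_zero, h1] at h4
  rw [h2]
  linarith

open Classical in
lemma unique_general (hN : 2 ≤ N) (p : RState N → ℝ) (hp : ∀ C, 0 < p C)
    (hpsum : ∑ C : RState N, p C = 1)
    (hpstat : ∀ D : RState N, ∑ C : RState N, p C * reducedP N C D = p D)
    (v : RState N → ℝ) (hv0 : ∀ C, 0 ≤ v C) (hv1 : ∑ C : RState N, v C = 1)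
    (hst : ∀ D : RState N, ∑ C : RState N, v C * reducedP N C D = v D) :
    ∀ C : RState N, v C = p C := by
  obtain ⟨Cm, _, hCm⟩ := Finset.exists_max_image Finset.univ (fun C => v C / p C)
    ⟨⟨{⟨0, by omega⟩}, Finset.singleton_nonempty _⟩, Finset.mem_univ _⟩
  set r := v Cm / p Cm with hr
  have hle : ∀ C, v C ≤ r * p C := by
    intro C
    have h := hCm C (Finset.mem_univ C)
    calc v C = (v C / p C) * p C := (div_mul_cancel₀ (v C) (ne_of_gt (hp C))).symm
      _ ≤ r * p C := mul_le_mul_of_nonneg_right h (hp C).le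
  have key : ∀ D : RState N, v D = r * p D → ∀ C, 0 < reducedP N C D → v C = r * p C := by
    intro D hD C hPC
    have hsum : ∑ C' : RState N, v C' * reducedP N C' D
        = ∑ C' : RState N, (r * p C') * reducedP N C' D := by
      rw [hst D]
      have h2 : ∑ C' : RState N, (r * p C') * reducedP N C' D
          = r * ∑ C' : RState N, p C' * reducedP N C' D := by
        rw [Finset.mul_sum]
        exact Finset.sum_congr rfl fun C' _ => by ring
      rw [h2, hpstat D, hD]
    have hterm : ∀ C' ∈ Finset.univ, v C' * reducedP N C' D ≤ (r * p C') * reducedP N C' D :=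
      fun C' _ => mul_le_mul_of_nonneg_right (hle C') (entry_nonneg hN C' D)
    have heq := (Finset.sum_eq_sum_iff_of_le hterm).mp hsum C (Finset.mem_univ C)
    exact mul_right_cancel₀ (ne_of_gt hPC) heq
  have chain : ∀ n (C : RState N), 0 < (reducedP N ^ n) C Cm → v C = r * p C := by
    intro n
    induction n with
    | zero =>
        intro C h
        rw [pow_zero] at h
        by_cases hC : C = Cm
        · subst hC
          rw [hr, div_mul_cancel₀ (v C) (ne_of_gt (hp C))]
        · rw [Matrix.one_apply_ne hC] at h
          exact absurd h (lt_irrefl 0)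
    | succ n ih =>
        intro C h
        rw [pow_succ', Matrix.mul_apply] at h
        have hex : ∃ E, 0 < reducedP N C E * (reducedP N ^ n) E Cm := by
          by_contra hno
          push_neg at hno
          have hs : ∑ E : RState N, reducedP N C E * (reducedP N ^ n) E Cm ≤ 0 :=
            Finset.sum_nonpos fun E _ => hno E
          linarith
        obtain ⟨E, hE⟩ := hex
        have h1 := entry_nonneg hN C E
        have h2 := pow_entry_nonneg hN n E Cm
        have hPC : 0 < reducedP N C E := by nlinarith
        have hPn : 0 < (reducedP N ^ n) E Cm := by nlinarith
        exact key E (ih E hPn) C hPC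
  have hall : ∀ C, v C = r * p C := fun C => by
    obtain ⟨n, hn⟩ := reach_all hN C Cm
    exact chain n C hn
  have hr1 : r = 1 := by
    have h := Finset.sum_congr rfl (fun C (_ : C ∈ Finset.univ) => hall C)
    rw [hv1, ← Finset.mul_sum, hpsum, mul_one] at h
    exact h.symm
  intro C
  rw [hall C, hr1, one_mul]

/-- The reduced chain is irreducible and aperiodic, hence ergodic with unique stationary
distribution `M(C) = 3^{|C|}/(4^N−1)`. -/
theorem reduced_chain_ergodic (N : ℕ) (hN : 2 ≤ N) :
    (∀ C D : RState N, ∃ n : ℕ, 0 < (reducedP N ^ n) C D) ∧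
    (∀ C : RState N, 0 < reducedP N C C) ∧
    (∀ D : RState N, ∑ C : RState N,
      ((3 : ℝ) ^ C.1.card / (4 ^ N - 1)) * reducedP N C D
        = (3 : ℝ) ^ D.1.card / (4 ^ N - 1)) ∧
    (∀ v : RState N → ℝ, (∀ C, 0 ≤ v C) → (∑ C : RState N, v C = 1) →
      (∀ D : RState N, ∑ C : RState N, v C * reducedP N C D = v D) →
      ∀ C : RState N, v C = (3 : ℝ) ^ C.1.card / (4 ^ N - 1)) := by
  refine ⟨fun C D => reach_all hN C D, fun C => diag_pos hN C, fun D => stat hN D,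
    fun v hv0 hv1 hst C => ?_⟩
  refine unique_general hN (fun C => (3 : ℝ) ^ C.1.card / (4 ^ N - 1)) ?_ ?_ ?_ v hv0 hv1 hst C
  · intro C
    exact div_pos (by positivity) (Z_pos hN)
  · show ∑ C : RState N, (3:ℝ)^C.1.card / ((4:ℝ)^N - 1) = 1
    rw [← Finset.sum_div, pi_sum]
    exact div_self (ne_of_gt (Z_pos hN))
  · exact fun D => stat hN D
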